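/- (Succinct structure of the GLS covariance) Suppose W = [[W1 ⊗ I_d],[W2 ⊗ 𝟙ᵀ]] and Σ = diag(Σ1 ⊗ I_d, Σ2), where W1 ∈ ℝ^{m1×k}, W2 ∈ ℝ^{m2×k}, Σ1 ∈ ℝ^{m1×m1} and Σ2 ∈ ℝ^{m2×m2} are positive definite, and W1 has full column rank. Then (WᵀΣ⁻¹W)⁻¹ = A ⊗ P0 + B ⊗ P1, where A = (W1ᵀΣ1⁻¹W1)⁻¹, B = (W1ᵀΣ1⁻¹W1 + d·W2ᵀΣ2⁻¹W2)⁻¹, P0 = I_d − (1/d)J_d, P1 = (1/d)J_d. -/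

import Mathlib

open Matrix
open scoped Kronecker

/-- The d×d all-ones matrix. -/
noncomputable def Jmat (d : ℕ) : Matrix (Fin d) (Fin d) ℝ := Matrix.of fun _ _ => 1

/-- P0 = I - (1/d)·J. -/
noncomputable def P0 (d : ℕ) : Matrix (Fin d) (Fin d) ℝ := 1 - ((d : ℝ)⁻¹) • Jmat d

/-- P1 = (1/d)·J. -/
noncomputable def P1 (d : ℕ) : Matrix (Fin d) (Fin d) ℝ := ((d : ℝ)⁻¹) • Jmat d

/-!
With `J = d • P1` and `1 = (1 - P1) + P1`, the Gram matrix is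
`Wᵀ Σ⁻¹ W = C₁ ⊗ 1 + C₂ ⊗ J = C₁ ⊗ (1 - P1) + (C₁ + d • C₂) ⊗ P1`, where `Cᵢ = Wᵢᵀ Σᵢ⁻¹ Wᵢ`.
Since `P1` is idempotent, the two summands live on complementary subspaces and the sum is
inverted termwise. Both coefficients are invertible: `C₁` is positive definite because `W1`
has full column rank, and `d • C₂` is positive semidefinite.
-/

namespace Matrix

variable {l m n K : Type*}

theorem mulVec_injective_of_rank_eq_card [Field K] [Fintype n] {A : Matrix m n K}
    (h : A.rank = Fintype.card n) : Function.Injective A.mulVec := by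
  rw [mulVec_injective_iff, linearIndependent_iff_card_eq_finrank_span, ← h,
    rank_eq_finrank_span_cols]
  rfl

theorem transpose_fromRows_mul_fromBlocks_mul_fromRows [CommSemiring K] [Fintype l] [Fintype m]
    (U : Matrix l n K) (V : Matrix m n K) (T₁ : Matrix l l K) (T₂ : Matrix m m K) :
    (fromRows U V)ᵀ * fromBlocks T₁ 0 0 T₂ * fromRows U V = Uᵀ * T₁ * U + Vᵀ * T₂ * V := by
  rw [transpose_fromRows, fromCols_mul_fromBlocks, fromCols_mul_fromRows]
  simp only [Matrix.mul_zero, add_zero, zero_add]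

theorem inv_kronecker_one_sub_add_kronecker [CommRing K] [Fintype m] [DecidableEq m]
    [Fintype n] [DecidableEq n] {P : Matrix n n K} (hP : IsIdempotentElem P)
    {X Y : Matrix m m K} (hX : IsUnit X) (hY : IsUnit Y) :
    (X ⊗ₖ (1 - P) + Y ⊗ₖ P)⁻¹ = X⁻¹ ⊗ₖ (1 - P) + Y⁻¹ ⊗ₖ P := by
  apply inv_eq_right_inv
  simp only [Matrix.add_mul, Matrix.mul_add, ← mul_kronecker_mul, hP.one_sub.eq,
    hP.eq, hP.mul_one_sub_self, hP.one_sub_mul_self, kronecker_zero, add_zero, zero_add,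
    mul_nonsing_inv _ ((isUnit_iff_isUnit_det _).mp hX),
    mul_nonsing_inv _ ((isUnit_iff_isUnit_det _).mp hY), ← kronecker_add, sub_add_cancel,
    one_kronecker_one]

end Matrix

theorem Jmat_eq_smul_P1 {d : ℕ} (hd : d ≠ 0) : Jmat d = (d : ℝ) • P1 d := by
  rw [P1, smul_smul, mul_inv_cancel₀ (by exact_mod_cast hd), one_smul]

theorem isIdempotentElem_P1 {d : ℕ} (hd : d ≠ 0) : IsIdempotentElem (P1 d) := by
  have hJ : Jmat d * Jmat d = (d : ℝ) • Jmat d := by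
    ext i j
    simp [Jmat, mul_apply]
  rw [IsIdempotentElem, P1, smul_mul_smul_comm, hJ, smul_smul, inv_mul_cancel_right₀
    (by exact_mod_cast hd)]

theorem kronecker_one_add_kronecker_Jmat {m : Type*} {d : ℕ} (hd : d ≠ 0)
    (C₁ C₂ : Matrix m m ℝ) :
    C₁ ⊗ₖ (1 : Matrix (Fin d) (Fin d) ℝ) + C₂ ⊗ₖ Jmat d
      = C₁ ⊗ₖ (1 - P1 d) + (C₁ + (d : ℝ) • C₂) ⊗ₖ P1 d := by
  rw [Jmat_eq_smul_P1 hd, add_kronecker, kronecker_smul, smul_kronecker, ← add_assoc,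
    ← kronecker_add, sub_add_cancel]

theorem transpose_submatrix_fst_mul_mul_submatrix_fst {m n : Type*} [Fintype m] {d : ℕ}
    (M : Matrix m n ℝ) (T : Matrix m m ℝ) :
    (M.submatrix id (Prod.fst : n × Fin d → n))ᵀ * T * M.submatrix id Prod.fst
      = (Mᵀ * T * M) ⊗ₖ Jmat d := by
  ext q q'
  simp only [mul_apply, transpose_apply, submatrix_apply, id, kroneckerMap_apply, Jmat, of_apply,
    mul_one]

theorem stmt_18 (d m1 m2 k : ℕ) (hd : 0 < d)
    (W1 : Matrix (Fin m1) (Fin k) ℝ) (W2 : Matrix (Fin m2) (Fin k) ℝ)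
    (hW1 : W1.rank = k)
    (S1 : Matrix (Fin m1) (Fin m1) ℝ) (hS1 : S1.PosDef)
    (S2 : Matrix (Fin m2) (Fin m2) ℝ) (hS2 : S2.PosDef)
    (W : Matrix ((Fin m1 × Fin d) ⊕ Fin m2) (Fin k × Fin d) ℝ)
    (hWtop : ∀ p q, W (Sum.inl p) q = (W1 ⊗ₖ (1 : Matrix (Fin d) (Fin d) ℝ)) p q)
    (hWbot : ∀ i q, W (Sum.inr i) q = W2 i q.1)
    (S : Matrix ((Fin m1 × Fin d) ⊕ Fin m2) ((Fin m1 × Fin d) ⊕ Fin m2) ℝ)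
    (hS : S = fromBlocks (S1 ⊗ₖ (1 : Matrix (Fin d) (Fin d) ℝ)) 0 0 S2)
    (A B : Matrix (Fin k) (Fin k) ℝ)
    (hA : A = (W1ᵀ * S1⁻¹ * W1)⁻¹)
    (hB : B = (W1ᵀ * S1⁻¹ * W1 + (d : ℝ) • (W2ᵀ * S2⁻¹ * W2))⁻¹) :
    (Wᵀ * S⁻¹ * W)⁻¹ = A ⊗ₖ P0 d + B ⊗ₖ P1 d := by
  have hW : W = fromRows (W1 ⊗ₖ 1) (W2.submatrix id Prod.fst) := by
    ext (p | i) q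
    exacts [hWtop p q, hWbot i q]
  have hSinv : S⁻¹ = fromBlocks (S1⁻¹ ⊗ₖ 1) 0 0 S2⁻¹ := by
    rw [hS, inv_fromBlocks_zero₂₁_of_isUnit_iff _ _ _
      (iff_of_true (hS1.kronecker .one).isUnit hS2.isUnit), inv_kronecker, inv_one]
    simp only [Matrix.mul_zero, Matrix.zero_mul, neg_zero]
  have hGram : Wᵀ * S⁻¹ * W
      = (W1ᵀ * S1⁻¹ * W1) ⊗ₖ (1 : Matrix (Fin d) (Fin d) ℝ) + (W2ᵀ * S2⁻¹ * W2) ⊗ₖ Jmat d := by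
    rw [hW, hSinv, transpose_fromRows_mul_fromBlocks_mul_fromRows,
      transpose_submatrix_fst_mul_mul_submatrix_fst, ← kroneckerMap_transpose, transpose_one,
      ← mul_kronecker_mul, ← mul_kronecker_mul, Matrix.mul_one, Matrix.mul_one]
  have hC₁ : (W1ᵀ * S1⁻¹ * W1).PosDef := by
    simpa only [conjTranspose_eq_transpose_of_trivial] using
      hS1.inv.conjTranspose_mul_mul_same (mulVec_injective_of_rank_eq_card (by simpa using hW1))
  have hC₂ : (W2ᵀ * S2⁻¹ * W2).PosSemidef := by
    simpa only [conjTranspose_eq_transpose_of_trivial] using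
      hS2.inv.posSemidef.conjTranspose_mul_mul_same W2
  rw [hGram, kronecker_one_add_kronecker_Jmat hd.ne', inv_kronecker_one_sub_add_kronecker
    (isIdempotentElem_P1 hd.ne') hC₁.isUnit (hC₁.add_posSemidef (hC₂.smul d.cast_nonneg)).isUnit,
    hA, hB]
  rfl
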